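/- arXiv:1508.00600 — 5 statements merged into one kernel-verified Lean document; each statement's English description precedes it below -/
import Mathlib

section
/- Let V₁ and V₂ be independent random variables on a probability space, with V₁ exponentially distributed with rate 1 and V₂ exponentially distributed with rate 1. Let I be a Bernoulli(p) random variable independent of (V₁, V₂), where p ∈ (0,1). Then the random variable I·(p·V₁) + (1-I)·(V₁ + p·V₂) is exponentially distributed with rate 1. -/
/-!
Compare characteristic functions. Conditioning on `I`, the law of the mixture is
`p • law(p V₁) + (1 - p) • law(V₁ + p V₂)`, and with `φ(t) = 1 / (1 - i t)` the characteristic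
function of the exponential law, its characteristic function is
`p φ(p t) + (1 - p) φ(t) φ(p t) = φ(t) φ(p t) (p (1 - i t) + 1 - p) = φ(t)`.
-/

open MeasureTheory ProbabilityTheory Set

/-- Gamma(a,1) law: density `u^(a-1) e^{-u} / Γ(a)` on `(0,∞)`. -/
noncomputable def gammaLaw (a : ℝ) : Measure ℝ :=
  MeasureTheory.volume.withDensity fun x =>
    ENNReal.ofReal (if 0 < x then x ^ (a - 1) * Real.exp (-x) / Real.Gamma a else 0)

/-- Beta(a,b) law: density `u^(a-1)(1-u)^(b-1) / B(a,b)` on `(0,1)`. -/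
noncomputable def betaLaw (a b : ℝ) : Measure ℝ :=
  MeasureTheory.volume.withDensity fun x =>
    ENNReal.ofReal (if x ∈ Set.Ioo (0 : ℝ) 1 then
      x ^ (a - 1) * (1 - x) ^ (b - 1) * Real.Gamma (a + b) / (Real.Gamma a * Real.Gamma b)
    else 0)

/-- Uniform law on `[a,b]`. -/
noncomputable def uniformLaw (a b : ℝ) : Measure ℝ :=
  MeasureTheory.volume.withDensity fun x =>
    ENNReal.ofReal (if x ∈ Set.Icc a b then 1 / (b - a) else 0)

/-- Bernoulli(p) law on `ℝ` (mass `p` at `1`, mass `1-p` at `0`). -/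
noncomputable def bernoulliLaw (p : ℝ) : Measure ℝ :=
  ENNReal.ofReal p • Measure.dirac (1 : ℝ) + ENNReal.ofReal (1 - p) • Measure.dirac (0 : ℝ)

lemma gammaLaw_one_eq_expMeasure : gammaLaw 1 = expMeasure 1 := by
  refine withDensity_congr_ae ?_
  filter_upwards [compl_mem_ae_iff.mpr (measure_singleton (0 : ℝ))] with x hx
  rcases lt_or_gt_of_ne (show x ≠ 0 from hx) with h | h
  · simp [gammaPDF_of_neg h, h.not_gt]
  · simp [gammaPDF_of_nonneg h.le, h]

lemma map_bernoulli_mixture {Ω : Type*} [MeasurableSpace Ω] {P : Measure Ω} [IsFiniteMeasure P]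
    {p : ℝ} {I A B : Ω → ℝ} (hI : Measurable I) (hA : Measurable A) (hB : Measurable B)
    (hIlaw : P.map I = bernoulliLaw p) (hind : IndepFun I (fun ω => (A ω, B ω)) P) :
    P.map (fun ω => I ω * A ω + (1 - I ω) * B ω)
      = ENNReal.ofReal p • P.map A + ENNReal.ofReal (1 - p) • P.map B := by
  set g : ℝ × ℝ × ℝ → ℝ := fun q => q.1 * q.2.1 + (1 - q.1) * q.2.2
  have hg : Measurable g := by fun_prop
  have hAB : Measurable fun ω => (A ω, B ω) := hA.prodMk hB
  have hjoint : P.map (fun ω => (I ω, (A ω, B ω)))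
      = (bernoulliLaw p).prod (P.map fun ω => (A ω, B ω)) := by
    rw [← hIlaw]
    exact (indepFun_iff_map_prod_eq_prod_map_map hI.aemeasurable hAB.aemeasurable).mp hind
  calc P.map (fun ω => I ω * A ω + (1 - I ω) * B ω)
      = ((bernoulliLaw p).prod (P.map fun ω => (A ω, B ω))).map g := by
        rw [← hjoint, Measure.map_map hg (hI.prodMk hAB)]
        rfl
    _ = ENNReal.ofReal p • (P.map fun ω => (A ω, B ω)).map Prod.fst
          + ENNReal.ofReal (1 - p) • (P.map fun ω => (A ω, B ω)).map Prod.snd := by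
        rw [bernoulliLaw, Measure.add_prod, Measure.prod_smul_left, Measure.prod_smul_left,
          Measure.dirac_prod, Measure.dirac_prod, Measure.map_add _ _ hg, Measure.map_smul,
          Measure.map_smul, Measure.map_map hg measurable_prodMk_left,
          Measure.map_map hg measurable_prodMk_left]
        congr 3 <;> ext <;> simp [g]
    _ = ENNReal.ofReal p • P.map A + ENNReal.ofReal (1 - p) • P.map B := by
        rw [Measure.map_map measurable_fst hAB, Measure.map_map measurable_snd hAB]
        rfl

section

open Complex

lemma charFun_expMeasure {r : ℝ} (hr : 0 < r) (t : ℝ) :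
    charFun (expMeasure r) t = r / (r - t * I) := by
  have hdens (x : ℝ) : (exponentialPDF r x).toReal • exp (t * x * I)
      = (Ici (0 : ℝ)).indicator (fun x : ℝ => r * exp ((t * I - r) * x)) x := by
    rcases lt_or_ge x 0 with hx | hx
    · simp [exponentialPDF_of_neg hx, hx]
    · rw [exponentialPDF_of_nonneg hx, indicator_of_mem (mem_Ici.mpr hx),
        ENNReal.toReal_ofReal (by positivity), real_smul]
      push_cast
      rw [mul_assoc, ← exp_add]
      ring_nf
  calc charFun (expMeasure r) t
      = ∫ x, (exponentialPDF r x).toReal • exp (t * x * I) := by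
        rw [charFun_apply_real]
        exact integral_withDensity_eq_integral_toReal_smul
          (measurable_gammaPDFReal 1 r).ennreal_ofReal
          (ae_of_all _ fun _ => ENNReal.ofReal_lt_top) _
    _ = r * ∫ x in Ioi (0 : ℝ), exp ((t * I - r) * x) := by
        simp_rw [hdens, integral_indicator measurableSet_Ici, integral_const_mul,
          integral_Ici_eq_integral_Ioi]
    _ = r / (r - t * I) := by
        rw [integral_exp_mul_complex_Ioi (by simpa using hr) 0, ← neg_sub, neg_div_neg_eq]
        simp [div_eq_mul_inv]

lemma charFun_ofReal_smul_add_ofReal_smul {E : Type*} [SeminormedAddCommGroup E]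
    [InnerProductSpace ℝ E] [MeasurableSpace E] [OpensMeasurableSpace E]
    {μ ν : Measure E} [IsFiniteMeasure μ] [IsFiniteMeasure ν] {a b : ℝ} (ha : 0 ≤ a) (hb : 0 ≤ b)
    (t : E) :
    charFun (ENNReal.ofReal a • μ + ENNReal.ofReal b • ν) t
      = a * charFun μ t + b * charFun ν t := by
  have hint (ρ : Measure E) [IsFiniteMeasure ρ] : Integrable (fun x => exp (inner ℝ x t * I)) ρ :=
    (integrable_const (1 : ℝ)).mono (by fun_prop) (by simp)
  rw [charFun_apply, integral_add_measure ((hint μ).smul_measure ENNReal.ofReal_ne_top)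
    ((hint ν).smul_measure ENNReal.ofReal_ne_top), integral_smul_measure, integral_smul_measure,
    ENNReal.toReal_ofReal ha, ENNReal.toReal_ofReal hb, charFun_apply, charFun_apply]
  simp [real_smul]

end

theorem stmt_1 {Ω : Type*} [MeasurableSpace Ω] (P : Measure Ω) [IsProbabilityMeasure P]
    (p : ℝ) (hp0 : 0 < p) (hp1 : p < 1)
    (V₁ V₂ I : Ω → ℝ) (hV₁ : Measurable V₁) (hV₂ : Measurable V₂) (hI : Measurable I)
    (hV₁law : Measure.map V₁ P = gammaLaw 1) (hV₂law : Measure.map V₂ P = gammaLaw 1)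
    (hIlaw : Measure.map I P = bernoulliLaw p)
    (hV₁V₂ : IndepFun V₁ V₂ P)
    (hIind : IndepFun I (fun ω => (V₁ ω, V₂ ω)) P) :
    Measure.map (fun ω => I ω * (p * V₁ ω) + (1 - I ω) * (V₁ ω + p * V₂ ω)) P
      = gammaLaw 1 := by
  rw [gammaLaw_one_eq_expMeasure] at hV₁law hV₂law ⊢
  have hφ (s : ℝ) : charFun (expMeasure 1) s = 1 / (1 - s * Complex.I) := by
    simpa using charFun_expMeasure one_pos s
  have hscaled (s : ℝ) :
      charFun (P.map fun ω => p * V₁ ω) s = 1 / (1 - (p * s : ℝ) * Complex.I) := by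
    rw [charFun_map_mul_comp hV₁.aemeasurable, hV₁law, hφ]
  have hsum (s : ℝ) : charFun (P.map fun ω => V₁ ω + p * V₂ ω) s
      = 1 / (1 - s * Complex.I) * (1 / (1 - (p * s : ℝ) * Complex.I)) := by
    rw [(hV₁V₂.comp measurable_id (measurable_const_mul p)).charFun_map_fun_add_eq_mul
      hV₁.aemeasurable (hV₂.const_mul p).aemeasurable, Pi.mul_apply, hV₁law, hφ,
      charFun_map_mul_comp hV₂.aemeasurable, hV₂law, hφ]
  have hne (s : ℝ) : (1 : ℂ) - s * Complex.I ≠ 0 := fun h => by simpa using congrArg Complex.re h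
  have : IsProbabilityMeasure (expMeasure 1) := isProbabilityMeasure_expMeasure one_pos
  refine Measure.ext_of_charFun (funext fun t => ?_)
  rw [map_bernoulli_mixture (A := fun ω => p * V₁ ω) (B := fun ω => V₁ ω + p * V₂ ω) hI
    (by fun_prop) (by fun_prop) hIlaw
    (hIind.comp (φ := id) (ψ := fun v : ℝ × ℝ => (p * v.1, v.1 + p * v.2)) measurable_id
      (by fun_prop)), charFun_ofReal_smul_add_ofReal_smul hp0.le (by linarith), hscaled, hsum, hφ]
  have hne_pt := hne (p * t)
  push_cast at hne_pt ⊢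
  field_simp [hne t, hne_pt]
  ring
end

section
/- Let z > 0, and let t ∈ ℝ with t ≠ 0. Then ∫₀¹ z(1-u)^{z-1}/(1 - (1 - u/2)·i·t)^{z+1} du = (1 - i t)^{-z}·(1 - i t/2)^{-1}, where the integral is of a complex-valued function and i is the imaginary unit. -/
/-!
Write the base as `α + u β` with `α = 1 - i t`, `β = i t / 2`; its real part is `1`, so every
complex power is a principal power holomorphic along the path. Since
`(α + u β) + (1 - u) β = α + β`, the product rule gives
`d/du [(1 - u)^z (α + u β)^(-z)] = -(α + β) · z (1 - u)^(z-1) / (α + u β)^(z+1)`,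
and the fundamental theorem of calculus evaluates the integral as `α^(-z) / (α + β)`.
-/

open Complex intervalIntegral

theorem hasDerivAt_one_sub_rpow_mul_cpow_neg {z u : ℝ} {α β : ℂ} (hu : u < 1)
    (hslit : α + u * β ∈ slitPlane) :
    HasDerivAt (fun x : ℝ => (((1 - x) ^ z : ℝ) : ℂ) * (α + x * β) ^ (-(z : ℂ)))
      (-(α + β) * (((z * (1 - u) ^ (z - 1) : ℝ) : ℂ) / (α + u * β) ^ ((z : ℂ) + 1))) u := by
  have h1u : 0 < 1 - u := sub_pos.2 hu
  have hpow : HasDerivAt (fun x : ℝ => (((1 - x) ^ z : ℝ) : ℂ))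
      ((-(z * (1 - u) ^ (z - 1)) : ℝ) : ℂ) u := by
    have := ((hasDerivAt_id u).const_sub 1).rpow_const (p := z) (Or.inl h1u.ne')
    exact HasDerivAt.ofReal_comp (by simpa using this)
  have haffine : HasDerivAt (fun x : ℝ => α + x * β) β u := by
    simpa using ((hasDerivAt_id u).ofReal_comp.mul_const β).const_add α
  have hcpow := (hasStrictDerivAt_cpow_const (c := -(z : ℂ)) hslit).hasDerivAt.comp u haffine
  refine (hpow.mul hcpow).congr_deriv ?_
  have hne : α + u * β ≠ 0 := slitPlane_ne_zero hslit
  have e1 : (((1 - u) ^ z : ℝ) : ℂ) = ((1 - u : ℝ) : ℂ) * (((1 - u) ^ (z - 1) : ℝ) : ℂ) := by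
    rw [Real.rpow_sub_one h1u.ne', ← ofReal_mul, mul_div_cancel₀ _ h1u.ne']
  have e2 : (α + u * β) ^ (-(z : ℂ) - 1) = ((α + u * β) ^ ((z : ℂ) + 1))⁻¹ := by
    rw [← cpow_neg]; ring_nf
  have e3 : (α + u * β) ^ (-(z : ℂ)) = (α + u * β) * ((α + u * β) ^ ((z : ℂ) + 1))⁻¹ := by
    rw [← cpow_neg, show -(z : ℂ) = 1 + -((z : ℂ) + 1) by ring, cpow_add _ _ hne, cpow_one]
  simp only [Function.comp_apply, e1, e2, e3]
  push_cast
  ring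

theorem intervalIntegrable_one_sub_rpow {r : ℝ} (hr : -1 < r) :
    IntervalIntegrable (fun u : ℝ => (1 - u) ^ r) MeasureTheory.volume 0 1 := by
  simpa using ((intervalIntegrable_rpow' (a := 0) (b := 1) hr).comp_sub_left 1).symm

theorem intervalIntegrable_one_sub_rpow_div_cpow {z : ℝ} {α β : ℂ} (hz : 0 < z)
    (hslit : ∀ u ∈ Set.Icc (0 : ℝ) 1, α + u * β ∈ slitPlane) :
    IntervalIntegrable
      (fun u : ℝ => ((z * (1 - u) ^ (z - 1) : ℝ) : ℂ) / (α + u * β) ^ ((z : ℂ) + 1))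
      MeasureTheory.volume 0 1 := by
  have hkernel := (intervalIntegrable_one_sub_rpow (r := z - 1) (by linarith)).const_mul z
  have hden : ContinuousOn (fun u : ℝ => ((α + u * β) ^ ((z : ℂ) + 1))⁻¹) (Set.uIcc 0 1) := by
    rw [Set.uIcc_of_le zero_le_one]
    refine (ContinuousOn.cpow_const (by fun_prop) hslit).inv₀ fun u hu => ?_
    simp [cpow_eq_zero_iff, slitPlane_ne_zero (hslit u hu)]
  simp_rw [div_eq_mul_inv]
  exact IntervalIntegrable.mul_continuousOn ⟨hkernel.1.ofReal, hkernel.2.ofReal⟩ hden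

theorem integral_one_sub_rpow_div_cpow {z : ℝ} {α β : ℂ} (hz : 0 < z)
    (hslit : ∀ u ∈ Set.Icc (0 : ℝ) 1, α + u * β ∈ slitPlane) :
    ∫ u in (0 : ℝ)..1, ((z * (1 - u) ^ (z - 1) : ℝ) : ℂ) / (α + u * β) ^ ((z : ℂ) + 1) =
      α ^ (-(z : ℂ)) * (α + β)⁻¹ := by
  have hFcont : ContinuousOn
      (fun x : ℝ => (((1 - x) ^ z : ℝ) : ℂ) * (α + x * β) ^ (-(z : ℂ))) (Set.Icc 0 1) := by
    refine ContinuousOn.mul ?_ (ContinuousOn.cpow_const (by fun_prop) hslit)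
    exact (continuous_ofReal.comp ((continuous_const.sub continuous_id).rpow_const
      fun _ => Or.inr hz.le)).continuousOn
  have hFTC := integral_eq_sub_of_hasDerivAt_of_le zero_le_one hFcont
    (fun u hu => hasDerivAt_one_sub_rpow_mul_cpow_neg hu.2 (hslit u (Set.Ioo_subset_Icc_self hu)))
    ((intervalIntegrable_one_sub_rpow_div_cpow hz hslit).const_mul _)
  have hsum : α + β ≠ 0 := by simpa using slitPlane_ne_zero (hslit 1 (by simp))
  rw [integral_const_mul] at hFTC
  simp only [sub_self, sub_zero, zero_mul, one_mul, add_zero, zero_sub, Real.zero_rpow hz.ne',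
    Real.one_rpow, ofReal_zero, ofReal_one] at hFTC
  rw [eq_mul_inv_iff_mul_eq₀ hsum]
  linear_combination -hFTC

theorem stmt_7_general (z t : ℝ) (hz : 0 < z) :
    ∫ u in (0:ℝ)..1,
        ((z * (1 - u) ^ (z - 1) : ℝ) : ℂ) /
          (1 - (1 - (u : ℂ) / 2) * Complex.I * t) ^ ((z : ℂ) + 1) =
      (1 - Complex.I * t) ^ (-(z : ℂ)) * (1 - Complex.I * t / 2)⁻¹ := by
  have haffine : ∀ u : ℝ,
      1 - (1 - (u : ℂ) / 2) * Complex.I * t = (1 - Complex.I * t) + u * (Complex.I * t / 2) :=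
    fun u => by ring
  have hslit : ∀ u ∈ Set.Icc (0 : ℝ) 1,
      (1 - Complex.I * t) + u * (Complex.I * t / 2) ∈ slitPlane := fun u _ => by
    rw [← haffine, mem_slitPlane_iff]
    exact Or.inl (by simp)
  simp only [haffine]
  rw [integral_one_sub_rpow_div_cpow hz hslit]
  congr 2
  ring

theorem stmt_7 (z t : ℝ) (hz : 0 < z) (ht : t ≠ 0) :
    ∫ u in (0:ℝ)..1,
        ((z * (1 - u) ^ (z - 1) : ℝ) : ℂ) /
          (1 - (1 - (u : ℂ) / 2) * Complex.I * t) ^ ((z : ℂ) + 1) =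
      (1 - Complex.I * t) ^ (-(z : ℂ)) * (1 - Complex.I * t / 2)⁻¹ :=
  stmt_7_general z t hz
end

section
/- Let w, y > 0. Let A ~ Beta(w, y) and V₁ ~ Gamma(w+y, 1) and V₂ ~ Gamma(y, 1) be mutually independent. Then A·V₁ + V₂ has distribution Gamma(w+y, 1). -/
/-!
`A V₁ ~ Gamma(w, 1)`, and adding the independent `V₂ ~ Gamma(y, 1)` gives Gamma(w + y, 1); both are
density computations for a convolution. For independent `A ~ Beta(a, b)` and `V ~ Gamma(a + b, r)`
the density of `A V` at `u` is `∫ f_A(t) f_V(u / t) / t dt`, and the substitution `t = 1 / (1 + s)`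
factors its integrand as the Gamma(a, r) density at `u` times the Gamma(b, r u) density in `s`.
For independent Gamma(a, r) and Gamma(b, r) variables, the substitution `t = x s` in the
convolution integral at `x` factors the integrand as `x⁻¹` times the Gamma(a + b, r) density at `x`
times the Beta(a, b) density in `s`.
-/

open MeasureTheory ProbabilityTheory Set

open scoped ENNReal

theorem Real.lintegral_eq_abs_mul_lintegral_comp_mul_left (f : ℝ → ℝ≥0∞) {c : ℝ}
    (hc : c ≠ 0) : ∫⁻ x, f x = ENNReal.ofReal |c| * ∫⁻ x, f (c * x) := by
  have h : ∫⁻ x, f (c * x) = ENNReal.ofReal |c⁻¹| * ∫⁻ x, f x := by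
    calc ∫⁻ x, f (c * x) = ∫⁻ x, f x ∂(volume.map (c * ·)) :=
          (lintegral_map_equiv f (Homeomorph.mulLeft₀ c hc).toMeasurableEquiv).symm
      _ = _ := by rw [Real.map_volume_mul_left hc, lintegral_smul_measure, smul_eq_mul]
  rw [h, ← mul_assoc, ← ENNReal.ofReal_mul (abs_nonneg c), ← abs_mul, mul_inv_cancel₀ hc,
    abs_one, ENNReal.ofReal_one, one_mul]

theorem Real.mconv_withDensity {ν : Measure ℝ} [SFinite ν] (hν : ∀ᵐ t ∂ν, t ≠ 0)
    {g : ℝ → ℝ≥0∞} (hg : Measurable g) :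
    ν ∗ₘ volume.withDensity g
      = volume.withDensity fun x => ∫⁻ t, ENNReal.ofReal |t⁻¹| * g (t⁻¹ * x) ∂ν := by
  have hdensity : Measurable fun x => ∫⁻ t, ENNReal.ofReal |t⁻¹| * g (t⁻¹ * x) ∂ν :=
    Measurable.lintegral_prod_left'
      (f := fun p : ℝ × ℝ => ENNReal.ofReal |p.1⁻¹| * g (p.1⁻¹ * p.2)) (by fun_prop)
  refine Measure.ext_of_lintegral _ fun φ hφ => ?_
  calc ∫⁻ z, φ z ∂(ν ∗ₘ volume.withDensity g)
      = ∫⁻ t, (∫⁻ v, g v * φ (t * v)) ∂ν := by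
        rw [Measure.lintegral_mconv hφ]
        refine lintegral_congr fun t => ?_
        exact lintegral_withDensity_eq_lintegral_mul _ hg (hφ.comp (measurable_const_mul t))
    _ = ∫⁻ t, (∫⁻ x, ENNReal.ofReal |t⁻¹| * g (t⁻¹ * x) * φ x) ∂ν := by
        refine lintegral_congr_ae (hν.mono fun t ht => ?_)
        dsimp only
        rw [Real.lintegral_eq_abs_mul_lintegral_comp_mul_left _ (inv_ne_zero ht),
          ← lintegral_const_mul _ (by fun_prop)]
        simp only [mul_inv_cancel_left₀ ht, mul_assoc]
    _ = ∫⁻ x, (∫⁻ t, ENNReal.ofReal |t⁻¹| * g (t⁻¹ * x) ∂ν) * φ x := by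
        rw [lintegral_lintegral_swap (by fun_prop)]
        exact lintegral_congr fun x => lintegral_mul_const _ (by fun_prop)
    _ = ∫⁻ x, φ x ∂(volume.withDensity _) :=
        (lintegral_withDensity_eq_lintegral_mul _ hdensity hφ).symm

@[fun_prop]
theorem measurable_gammaPDF (a r : ℝ) : Measurable (gammaPDF a r) :=
  (measurable_gammaPDFReal a r).ennreal_ofReal

@[fun_prop]
theorem measurable_betaPDF (a b : ℝ) : Measurable (betaPDF a b) :=
  (measurable_betaPDFReal a b).ennreal_ofReal

theorem gammaLaw_eq_gammaMeasure (a : ℝ) : gammaLaw a = gammaMeasure a 1 := by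
  refine withDensity_congr_ae ?_
  filter_upwards [Measure.ae_ne volume 0] with x hx
  rcases hx.lt_or_gt with hx | hx
  · simp [gammaPDF_of_neg hx, hx.not_gt]
  · simp only [gammaPDF_of_nonneg hx.le, if_pos hx, Real.one_rpow, one_mul]
    ring_nf

theorem betaLaw_eq_betaMeasure (a b : ℝ) : betaLaw a b = betaMeasure a b := by
  unfold betaLaw betaMeasure
  congr with x
  rw [betaPDF_eq, beta, one_div_div]
  exact congrArg ENNReal.ofReal (if_congr Iff.rfl (by ring) rfl)

-- At `s = 0` or `s = 1` the two sides can differ, since `0 ^ 0 = 1`.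
theorem gammaPDFReal_mul_gammaPDFReal_sub {a b r x s : ℝ} (ha : 0 < a) (hb : 0 < b)
    (hr : 0 < r) (hx : 0 < x) (hs₀ : s ≠ 0) (hs₁ : s ≠ 1) :
    gammaPDFReal a r (x * s) * gammaPDFReal b r (x - x * s)
      = x⁻¹ * gammaPDFReal (a + b) r x * betaPDFReal a b s := by
  rcases hs₀.lt_or_gt with hs | hs₀
  · simp [gammaPDFReal, betaPDFReal, (mul_neg_of_pos_of_neg hx hs).not_ge, hs.not_gt]
  rcases hs₁.lt_or_gt with hs₁ | hs
  · have h1s : 0 < 1 - s := sub_pos.mpr hs₁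
    rw [gammaPDFReal, gammaPDFReal, gammaPDFReal, betaPDFReal, if_pos (by positivity),
      if_pos (by nlinarith), if_pos hx.le, if_pos ⟨hs₀, hs₁⟩, beta, one_div_div,
      show x - x * s = x * (1 - s) by ring, Real.mul_rpow hx.le hs₀.le,
      Real.mul_rpow hx.le h1s.le, Real.rpow_add hr,
      show a + b - 1 = (a - 1) + (b - 1) + 1 by ring, Real.rpow_add hx, Real.rpow_add hx,
      Real.rpow_one, show -(r * x) = -(r * (x * s)) + -(r * (x * (1 - s))) by ring, Real.exp_add]
    have := Real.Gamma_pos_of_pos ha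
    have := Real.Gamma_pos_of_pos hb
    have := Real.Gamma_pos_of_pos (add_pos ha hb)
    field_simp
  · simp [gammaPDFReal, betaPDFReal, (show x - x * s < 0 by nlinarith).not_ge, hs.not_gt]

theorem lconvolution_gammaPDF_of_pos {a b r x : ℝ} (ha : 0 < a) (hb : 0 < b) (hr : 0 < r)
    (hx : 0 < x) : (gammaPDF a r ⋆ₗ gammaPDF b r) x = gammaPDF (a + b) r x := by
  have hfactor : (fun s => gammaPDF a r (x * s) * gammaPDF b r (-(x * s) + x))
      =ᵐ[volume] fun s => ENNReal.ofReal (x⁻¹ * gammaPDFReal (a + b) r x) * betaPDF a b s := by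
    filter_upwards [Measure.ae_ne volume 0, Measure.ae_ne volume 1] with s hs₀ hs₁
    have := gammaPDFReal_nonneg (add_pos ha hb) hr x
    rw [gammaPDF, gammaPDF, betaPDF, ← ENNReal.ofReal_mul (gammaPDFReal_nonneg ha hr _),
      ← ENNReal.ofReal_mul (by positivity), neg_add_eq_sub,
      gammaPDFReal_mul_gammaPDFReal_sub ha hb hr hx hs₀ hs₁]
  rw [lconvolution_def, Real.lintegral_eq_abs_mul_lintegral_comp_mul_left _ hx.ne',
    lintegral_congr_ae hfactor, lintegral_const_mul _ (measurable_betaPDF a b),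
    lintegral_betaPDF_eq_one ha hb, mul_one, abs_of_pos hx, ← ENNReal.ofReal_mul hx.le,
    ← mul_assoc, mul_inv_cancel₀ hx.ne', one_mul, gammaPDF]

theorem lconvolution_gammaPDF_of_neg {a b r x : ℝ} (hx : x < 0) :
    (gammaPDF a r ⋆ₗ gammaPDF b r) x = 0 := by
  refine lintegral_eq_zero_of_ae_eq_zero (.of_forall fun t => ?_)
  rcases lt_or_ge t 0 with ht | ht
  · simp [gammaPDF_of_neg ht]
  · simp [gammaPDF_of_neg (show -t + x < 0 by linarith)]

theorem gammaMeasure_conv_gammaMeasure {a b r : ℝ} (ha : 0 < a) (hb : 0 < b) (hr : 0 < r) :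
    gammaMeasure a r ∗ gammaMeasure b r = gammaMeasure (a + b) r := by
  rw [gammaMeasure, gammaMeasure, conv_withDensity_eq_lconvolution (measurable_gammaPDF a r)
    (measurable_gammaPDF b r), gammaMeasure]
  refine withDensity_congr_ae ?_
  filter_upwards [Measure.ae_ne volume 0] with x hx
  rcases hx.lt_or_gt with hx | hx
  · rw [lconvolution_gammaPDF_of_neg hx, gammaPDF_of_neg hx]
  · exact lconvolution_gammaPDF_of_pos ha hb hr hx

theorem betaPDFReal_inv_one_add_mul_gammaPDFReal {a b r u s : ℝ} (ha : 0 < a) (hb : 0 < b)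
    (hr : 0 < r) (hu : 0 < u) (hs : 0 < s) :
    ((1 + s) ^ 2)⁻¹ *
        (betaPDFReal a b (1 + s)⁻¹ * ((1 + s) * gammaPDFReal (a + b) r ((1 + s) * u)))
      = gammaPDFReal a r u * gammaPDFReal b (r * u) s := by
  have hp : 0 < 1 + s := by linarith
  have hp₁ : (1 + s)⁻¹ < 1 := inv_lt_one_of_one_lt₀ (by linarith)
  -- Split every power into powers of `1 + s`, `u`, `r` with exponents among `a - 1`, `b - 1`,
  -- `a`, `b`; the identity is then rational in these atoms.
  rw [gammaPDFReal, gammaPDFReal, gammaPDFReal, betaPDFReal, if_pos hu.le, if_pos hs.le,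
    if_pos (show 0 ≤ (1 + s) * u by positivity), if_pos ⟨inv_pos.mpr hp, hp₁⟩, beta,
    one_div_div, show 1 - (1 + s)⁻¹ = s * (1 + s)⁻¹ by field_simp; ring,
    Real.mul_rpow hs.le (by positivity), Real.inv_rpow hp.le, Real.inv_rpow hp.le,
    Real.mul_rpow hp.le hu.le, Real.mul_rpow hr.le hu.le, Real.rpow_add hr,
    show a + b - 1 = (a - 1) + (b - 1) + 1 by ring, Real.rpow_add hp,
    Real.rpow_add hp, Real.rpow_one, show (a - 1) + (b - 1) + 1 = (a - 1) + b by ring,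
    Real.rpow_add hu, show -(r * ((1 + s) * u)) = -(r * u) + -(r * u * s) by ring, Real.exp_add]
  have := Real.Gamma_pos_of_pos ha
  have := Real.Gamma_pos_of_pos hb
  have := Real.Gamma_pos_of_pos (add_pos ha hb)
  field_simp

theorem image_inv_one_add_Ioi : (fun s : ℝ => (1 + s)⁻¹) '' Ioi 0 = Ioo 0 1 := by
  ext t
  constructor
  · rintro ⟨s, hs, rfl⟩
    have hs : 0 < s := hs
    exact ⟨by positivity, inv_lt_one_of_one_lt₀ (by linarith)⟩
  · rintro ⟨ht₀, ht₁⟩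
    exact ⟨t⁻¹ - 1, sub_pos.mpr (one_lt_inv₀ ht₀ |>.mpr ht₁), by simp⟩

theorem setLIntegral_Ioi_gammaPDF_eq_one {a r : ℝ} (ha : 0 < a) (hr : 0 < r) :
    ∫⁻ x in Ioi 0, gammaPDF a r x = 1 := by
  rw [Measure.restrict_congr_set Ioi_ae_eq_Ici, setLIntegral_eq_of_support_subset,
    lintegral_gammaPDF_eq_one ha hr]
  exact fun x hx => not_lt.mp fun hx' => hx (gammaPDF_of_neg hx')

theorem lintegral_betaMeasure_gammaPDF_inv_mul {a b r u : ℝ} (ha : 0 < a) (hb : 0 < b)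
    (hr : 0 < r) (hu : 0 < u) :
    ∫⁻ t, ENNReal.ofReal |t⁻¹| * gammaPDF (a + b) r (t⁻¹ * u) ∂betaMeasure a b
      = gammaPDF a r u := by
  set F : ℝ → ℝ≥0∞ := fun t =>
    betaPDF a b t * (ENNReal.ofReal |t⁻¹| * gammaPDF (a + b) r (t⁻¹ * u))
  have hsupport : F.support ⊆ Ioo 0 1 := by
    intro t ht
    by_contra hnot
    rcases not_and_or.mp hnot with ht₀ | ht₁
    · exact ht (by simp [F, betaPDF_eq_zero_of_nonpos (not_lt.mp ht₀)])
    · exact ht (by simp [F, betaPDF_eq_zero_of_one_le (not_lt.mp ht₁)])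
  have hderiv : ∀ s ∈ Ioi (0 : ℝ),
      HasDerivWithinAt (fun s : ℝ => (1 + s)⁻¹) (-1 / (1 + s) ^ 2) (Ioi 0) s := fun s hs =>
    (((hasDerivAt_id' s).const_add 1).inv (by linarith [mem_Ioi.mp hs])).hasDerivWithinAt
  have hinj : InjOn (fun s : ℝ => (1 + s)⁻¹) (Ioi 0) :=
    (inv_injective.comp (add_right_injective 1)).injOn
  have hfactor : ∀ s ∈ Ioi (0 : ℝ), ENNReal.ofReal |-1 / (1 + s) ^ 2| * F (1 + s)⁻¹
      = ENNReal.ofReal (gammaPDFReal a r u) * gammaPDF b (r * u) s := by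
    intro s hs
    have hs : 0 < s := hs
    have hp : 0 < 1 + s := by linarith
    simp only [F, inv_inv, neg_div, abs_neg, one_div, abs_inv, abs_pow, abs_of_pos hp, betaPDF,
      gammaPDF]
    rw [← ENNReal.ofReal_mul hp.le,
      ← ENNReal.ofReal_mul' (mul_nonneg hp.le (gammaPDFReal_nonneg (add_pos ha hb) hr _)),
      ← ENNReal.ofReal_mul (by positivity), ← ENNReal.ofReal_mul (gammaPDFReal_nonneg ha hr u),
      betaPDFReal_inv_one_add_mul_gammaPDFReal ha hb hr hu hs]
  calc ∫⁻ t, ENNReal.ofReal |t⁻¹| * gammaPDF (a + b) r (t⁻¹ * u) ∂betaMeasure a b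
      = ∫⁻ t, F t := lintegral_withDensity_eq_lintegral_mul _ (measurable_betaPDF a b) (by fun_prop)
    _ = ∫⁻ t in Ioo 0 1, F t := (setLIntegral_eq_of_support_subset hsupport).symm
    _ = ∫⁻ s in Ioi 0, ENNReal.ofReal |-1 / (1 + s) ^ 2| * F (1 + s)⁻¹ := by
      rw [← image_inv_one_add_Ioi,
        lintegral_image_eq_lintegral_abs_deriv_mul measurableSet_Ioi hderiv hinj]
    _ = ∫⁻ s in Ioi 0, ENNReal.ofReal (gammaPDFReal a r u) * gammaPDF b (r * u) s :=
      setLIntegral_congr_fun measurableSet_Ioi hfactor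
    _ = gammaPDF a r u := by
      rw [lintegral_const_mul _ (measurable_gammaPDF _ _),
        setLIntegral_Ioi_gammaPDF_eq_one hb (mul_pos hr hu), mul_one, gammaPDF]

theorem betaMeasure_mconv_gammaMeasure {a b r : ℝ} (ha : 0 < a) (hb : 0 < b) (hr : 0 < r) :
    betaMeasure a b ∗ₘ gammaMeasure (a + b) r = gammaMeasure a r := by
  have hpos : ∀ᵐ t ∂betaMeasure a b, 0 < t := (ae_withDensity_iff (measurable_betaPDF a b)).mpr
    (.of_forall fun t ht => not_le.mp fun h => ht (betaPDF_eq_zero_of_nonpos h))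
  have : IsProbabilityMeasure (betaMeasure a b) := isProbabilityMeasureBeta ha hb
  rw [gammaMeasure, gammaMeasure,
    Real.mconv_withDensity (hpos.mono fun t ht => ht.ne') (measurable_gammaPDF _ _)]
  refine withDensity_congr_ae ?_
  filter_upwards [Measure.ae_ne volume 0] with u hu
  rcases hu.lt_or_gt with hu | hu
  · rw [gammaPDF_of_neg hu]
    refine lintegral_eq_zero_of_ae_eq_zero (hpos.mono fun t ht => ?_)
    simp only [gammaPDF_of_neg (mul_neg_of_pos_of_neg (inv_pos.mpr ht) hu), mul_zero,
      Pi.zero_apply]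
  · exact lintegral_betaMeasure_gammaPDF_inv_mul ha hb hr hu

theorem stmt_10 {Ω : Type*} [MeasurableSpace Ω] (P : Measure Ω) [IsProbabilityMeasure P]
    (w y : ℝ) (hw : 0 < w) (hy : 0 < y)
    (A V₁ V₂ : Ω → ℝ) (hA : Measurable A) (hV₁ : Measurable V₁) (hV₂ : Measurable V₂)
    (hAlaw : Measure.map A P = betaLaw w y)
    (hV₁law : Measure.map V₁ P = gammaLaw (w + y))
    (hV₂law : Measure.map V₂ P = gammaLaw y)
    (hind : iIndepFun ![A, V₁, V₂] P) :
    Measure.map (fun ω => A ω * V₁ ω + V₂ ω) P = gammaLaw (w + y) := by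
  have hAV₁ : IndepFun A V₁ P := hind.indepFun (i := 0) (j := 1) (by decide)
  have hAV₁V₂ : IndepFun (A * V₁) V₂ P :=
    hind.indepFun_mul_left (fun i => by fin_cases i <;> assumption) 0 1 2 (by decide) (by decide)
  have hprod : P.map (A * V₁) = gammaMeasure w 1 := by
    rw [hAV₁.map_mul_eq_map_mconv_map hA hV₁, hAlaw, hV₁law, betaLaw_eq_betaMeasure,
      gammaLaw_eq_gammaMeasure]
    exact betaMeasure_mconv_gammaMeasure hw hy one_pos
  change P.map (A * V₁ + V₂) = _
  rw [hAV₁V₂.map_add_eq_map_conv_map (hA.mul hV₁) hV₂, hprod, hV₂law, gammaLaw_eq_gammaMeasure,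
    gammaLaw_eq_gammaMeasure, gammaMeasure_conv_gammaMeasure hw hy one_pos]
end

section
/- Let p ∈ (0,1). Let A ~ Uniform[p, 1], let B ~ Bernoulli(1-p), and let V₁ ~ Gamma(2, 1), V₂ ~ Gamma(1, 1) (standard exponential), all mutually independent. Then A·V₁ + B·V₂ has distribution Gamma(2, 1). -/
open MeasureTheory ProbabilityTheory Set

open Complex Filter Topology
open scoped ENNReal

/-! The characteristic function of Gamma(a, 1) is `(1 - i t)⁻ᵃ`. Conditioning on `A`, resp. `B`,
`E[exp(i t A V₁)] = (1 - p)⁻¹ ∫_p^1 (1 - i t a)⁻² da = 1 / ((1 - i t) (1 - i t p))`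
(an antiderivative is `a / (1 - i t a)`) and `E[exp(i t B V₂)] = (1 - p) / (1 - i t) + p
= (1 - i t p) / (1 - i t)`. By independence the characteristic function of `A V₁ + B V₂` is the
product `(1 - i t)⁻²`, and characteristic functions determine finite measures. -/

lemma integral_withDensity_ofReal {X E : Type*} [MeasurableSpace X] {μ : Measure X}
    [NormedAddCommGroup E] [NormedSpace ℝ E] {f : X → ℝ} (hf : Measurable f)
    (hf0 : ∀ x, 0 ≤ f x) (g : X → E) :
    ∫ x, g x ∂μ.withDensity (fun x => ENNReal.ofReal (f x)) = ∫ x, f x • g x ∂μ := by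
  rw [integral_withDensity_eq_integral_toReal_smul hf.ennreal_ofReal
    (ae_of_all _ fun _ => ENNReal.ofReal_lt_top)]
  simp_rw [ENNReal.toReal_ofReal (hf0 _)]

lemma integral_gammaLaw {E : Type*} [NormedAddCommGroup E] [NormedSpace ℝ E] {a : ℝ}
    (ha : 0 < a) (g : ℝ → E) :
    ∫ x, g x ∂gammaLaw a =
      ∫ x in Ioi 0, (x ^ (a - 1) * Real.exp (-x) / Real.Gamma a) • g x := by
  rw [gammaLaw, integral_withDensity_ofReal (Measurable.ite measurableSet_Ioi (by fun_prop)
    measurable_const) fun x => ?_, ← integral_indicator measurableSet_Ioi]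
  · congr 1 with x
    by_cases hx : 0 < x <;> simp [hx, indicator]
  · split_ifs with hx
    · have := Real.Gamma_pos_of_pos ha
      positivity
    · rfl

lemma tendsto_cexp_mul_atTop {b : ℂ} (hb : b.re < 0) :
    Tendsto (fun y : ℝ => cexp (b * y)) atTop (𝓝 0) := by
  simpa [Complex.tendsto_exp_nhds_zero_iff] using tendsto_const_nhds.neg_mul_atTop hb tendsto_id

lemma norm_ofReal_mul_cexp {b : ℂ} {x : ℝ} (hx : 0 ≤ x) :
    ‖(x : ℂ) * cexp (b * x)‖ = x * Real.exp (b.re * x) := by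
  rw [norm_mul, Complex.norm_exp, Complex.norm_of_nonneg hx]
  simp

lemma integral_Ioi_mul_cexp {b : ℂ} (hb : b.re < 0) :
    ∫ x in Ioi (0:ℝ), (x : ℂ) * cexp (b * x) = 1 / b ^ 2 := by
  have hb0 : b ≠ 0 := fun h => by simp [h] at hb
  have hderiv : ∀ x ∈ Ici (0:ℝ),
      HasDerivAt (fun y : ℝ => ((y : ℂ) / b - 1 / b ^ 2) * cexp (b * y))
        (x * cexp (b * x)) x := by
    intro x _
    have h1 : HasDerivAt (fun y : ℝ => (y : ℂ)) 1 x := hasDerivAt_id x |>.ofReal_comp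
    have h2 := ((h1.div_const b).sub_const (1 / b ^ 2)).mul (h1.const_mul b).cexp
    refine h2.congr_deriv ?_
    field_simp
    ring
  have hint : IntegrableOn (fun x : ℝ => (x : ℂ) * cexp (b * x)) (Ioi 0) := by
    refine (integrableOn_rpow_mul_exp_neg_mul_rpow (s := 1) (p := 1) (b := -b.re) (by norm_num)
      one_pos (by linarith)).mono' (by fun_prop) ?_
    filter_upwards [ae_restrict_mem measurableSet_Ioi] with x hx
    rw [norm_ofReal_mul_cexp (le_of_lt hx)]
    simp
  have hlim :
      Tendsto (fun y : ℝ => ((y : ℂ) / b - 1 / b ^ 2) * cexp (b * y)) atTop (𝓝 0) := by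
    have h1 : Tendsto (fun y : ℝ => (y : ℂ) * cexp (b * y)) atTop (𝓝 0) := by
      rw [tendsto_zero_iff_norm_tendsto_zero]
      refine (tendsto_rpow_mul_exp_neg_mul_atTop_nhds_zero 1 (-b.re) (by linarith)).congr' ?_
      filter_upwards [eventually_ge_atTop 0] with y hy
      rw [norm_ofReal_mul_cexp hy]
      simp
    have h2 := (h1.const_mul (1 / b)).sub ((tendsto_cexp_mul_atTop hb).const_mul (1 / b ^ 2))
    simp only [mul_zero, sub_zero] at h2
    refine h2.congr fun y => ?_
    ring
  rw [integral_Ioi_of_hasDerivAt_of_tendsto' hderiv hint hlim]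
  simp

lemma charFun_gammaLaw_one (t : ℝ) : charFun (gammaLaw 1) t = 1 / (1 - t * I) := by
  have hre : (t * I - 1).re < 0 := by simp
  rw [charFun_apply_real, integral_gammaLaw one_pos]
  calc _ = ∫ x in Ioi (0:ℝ), cexp ((t * I - 1) * x) := by
        refine setIntegral_congr_fun measurableSet_Ioi fun x _ => ?_
        norm_num [Complex.real_smul, ← Complex.exp_add]
        ring_nf
    _ = 1 / (1 - t * I) := by
        rw [integral_exp_mul_complex_Ioi hre, ofReal_zero, mul_zero, Complex.exp_zero, ← neg_sub,
          div_neg, neg_div, neg_neg]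

lemma charFun_gammaLaw_two (t : ℝ) : charFun (gammaLaw 2) t = 1 / (1 - t * I) ^ 2 := by
  have hre : (t * I - 1).re < 0 := by simp
  rw [charFun_apply_real, integral_gammaLaw two_pos]
  calc _ = ∫ x in Ioi (0:ℝ), (x : ℂ) * cexp ((t * I - 1) * x) := by
        refine setIntegral_congr_fun measurableSet_Ioi fun x _ => ?_
        norm_num [Real.Gamma_two, Complex.real_smul]
        rw [mul_assoc, ← Complex.exp_add]
        ring_nf
    _ = 1 / (1 - t * I) ^ 2 := by
        rw [integral_Ioi_mul_cexp hre, ← neg_sub, neg_sq]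

lemma integral_uniformLaw {E : Type*} [NormedAddCommGroup E] [NormedSpace ℝ E] {a b : ℝ}
    (hab : a ≤ b) (g : ℝ → E) :
    ∫ x, g x ∂uniformLaw a b = (b - a)⁻¹ • ∫ x in a..b, g x := by
  rw [uniformLaw,
    integral_withDensity_ofReal (f := fun x => if x ∈ Icc a b then 1 / (b - a) else 0)
      (Measurable.ite measurableSet_Icc measurable_const measurable_const) fun x => ?_]
  · have hind : (fun x => (if x ∈ Icc a b then 1 / (b - a) else 0) • g x)
        = (Icc a b).indicator fun x => (b - a)⁻¹ • g x := by
      ext x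
      by_cases hx : x ∈ Icc a b <;> simp [hx]
    rw [hind, integral_indicator measurableSet_Icc, integral_smul, integral_Icc_eq_integral_Ioc,
      intervalIntegral.integral_of_le hab]
  · split_ifs
    · exact one_div_nonneg.mpr (sub_nonneg.mpr hab)
    · rfl

lemma one_sub_ofReal_mul_I_ne_zero (x : ℝ) : 1 - x * I ≠ 0 := by
  intro h
  simpa using congrArg Complex.re h

lemma integral_uniformLaw_charFun_gammaLaw_two {a b : ℝ} (hab : a < b) (t : ℝ) :
    ∫ x, charFun (gammaLaw 2) (x * t) ∂uniformLaw a b =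
      1 / ((1 - a * t * I) * (1 - b * t * I)) := by
  have hne (x : ℝ) : 1 - x * t * I ≠ 0 := by exact_mod_cast one_sub_ofReal_mul_I_ne_zero (x * t)
  have hderiv : ∀ x ∈ uIcc a b, HasDerivAt (fun y : ℝ => (y : ℂ) / (1 - y * t * I))
      (1 / (1 - x * t * I) ^ 2) x := by
    intro x _
    have h1 : HasDerivAt (fun y : ℝ => (y : ℂ)) 1 x := hasDerivAt_id x |>.ofReal_comp
    have h2 : HasDerivAt (fun y : ℝ => 1 - (y : ℂ) * t * I) (-(t * I)) x := by
      simpa using ((h1.mul_const (t : ℂ)).mul_const I).const_sub 1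
    refine (h1.fun_div h2 (hne x)).congr_deriv ?_
    field_simp [hne x]
    ring
  have hcont : Continuous fun x : ℝ => 1 / (1 - x * t * I) ^ 2 :=
    continuous_const.div (by fun_prop) fun x => pow_ne_zero 2 (hne x)
  have hba : (b - a : ℂ) ≠ 0 := by exact_mod_cast (sub_pos.mpr hab).ne'
  simp_rw [integral_uniformLaw hab.le, charFun_gammaLaw_two, Complex.ofReal_mul]
  rw [intervalIntegral.integral_eq_sub_of_hasDerivAt hderiv (hcont.intervalIntegrable a b),
    Complex.real_smul, Complex.ofReal_inv, Complex.ofReal_sub]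
  field_simp [hne a, hne b]
  ring

lemma integral_bernoulliLaw {E : Type*} [NormedAddCommGroup E] [NormedSpace ℝ E] [CompleteSpace E]
    {q : ℝ}
    (hq0 : 0 ≤ q) (hq1 : q ≤ 1) (g : ℝ → E) :
    ∫ x, g x ∂bernoulliLaw q = q • g 1 + (1 - q) • g 0 := by
  have hint (x : ℝ) (c : ℝ≥0∞) (hc : c ≠ ⊤) : Integrable g (c • Measure.dirac x) :=
    (integrable_dirac (by simp)).smul_measure hc
  rw [bernoulliLaw, integral_add_measure (hint _ _ ENNReal.ofReal_ne_top)
    (hint _ _ ENNReal.ofReal_ne_top), integral_smul_measure, integral_smul_measure, integral_dirac,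
    integral_dirac, ENNReal.toReal_ofReal hq0, ENNReal.toReal_ofReal (sub_nonneg.mpr hq1)]

lemma charFun_map_mul_of_indepFun {Ω : Type*} [MeasurableSpace Ω] {P : Measure Ω}
    [IsFiniteMeasure P] {X Y : Ω → ℝ} (hXY : IndepFun X Y P) (hX : Measurable X)
    (hY : Measurable Y) (t : ℝ) :
    charFun (P.map fun ω => X ω * Y ω) t =
      ∫ x, charFun (P.map Y) (x * t) ∂P.map X := by
  have hlaw :
      P.map (fun ω => X ω * Y ω) = ((P.map X).prod (P.map Y)).map fun z => z.1 * z.2 := by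
    rw [← (indepFun_iff_map_prod_eq_prod_map_map hX.aemeasurable hY.aemeasurable).mp hXY,
      Measure.map_map (by fun_prop) (hX.prodMk hY)]
    rfl
  rw [hlaw, charFun_apply_real, integral_map (by fun_prop) (by fun_prop),
    integral_prod _ ((integrable_const (1 : ℝ)).mono' (by fun_prop) (ae_of_all _ fun z => ?_))]
  · congr 1 with x
    rw [charFun_apply_real]
    congr 1 with y
    push_cast
    ring_nf
  · simp [Complex.norm_exp]

theorem stmt_12 {Ω : Type*} [MeasurableSpace Ω] (P : Measure Ω) [IsProbabilityMeasure P]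
    (p : ℝ) (hp0 : 0 < p) (hp1 : p < 1)
    (A B V₁ V₂ : Ω → ℝ) (hA : Measurable A) (hB : Measurable B)
    (hV₁ : Measurable V₁) (hV₂ : Measurable V₂)
    (hAlaw : Measure.map A P = uniformLaw p 1)
    (hBlaw : Measure.map B P = bernoulliLaw (1 - p))
    (hV₁law : Measure.map V₁ P = gammaLaw 2)
    (hV₂law : Measure.map V₂ P = gammaLaw 1)
    (hind : iIndepFun ![A, B, V₁, V₂] P) :
    Measure.map (fun ω => A ω * V₁ ω + B ω * V₂ ω) P = gammaLaw 2 := by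
  have hmeas : ∀ i, Measurable (![A, B, V₁, V₂] i) := by
    intro i
    fin_cases i <;> assumption
  have hAV : IndepFun A V₁ P := hind.indepFun (show (0 : Fin 4) ≠ 2 by decide)
  have hBV : IndepFun B V₂ P := hind.indepFun (show (1 : Fin 4) ≠ 3 by decide)
  have hsummands : IndepFun (fun ω => A ω * V₁ ω) (fun ω => B ω * V₂ ω) P :=
    (hind.indepFun_prodMk_prodMk hmeas 0 2 1 3 (by decide) (by decide) (by decide)
      (by decide)).comp (measurable_fst.mul measurable_snd) (measurable_fst.mul measurable_snd)
  -- makes both sides visibly finite measures, as `Measure.ext_of_charFun` requires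
  rw [← hV₁law]
  refine Measure.ext_of_charFun (funext fun t => ?_)
  rw [hsummands.charFun_map_fun_add_eq_mul (by fun_prop) (by fun_prop), Pi.mul_apply,
    charFun_map_mul_of_indepFun hAV hA hV₁, charFun_map_mul_of_indepFun hBV hB hV₂, hAlaw,
    hBlaw, hV₁law, hV₂law, integral_uniformLaw_charFun_gammaLaw_two hp1,
    integral_bernoulliLaw (by linarith) (by linarith), one_mul, zero_mul, charFun_gammaLaw_one,
    charFun_gammaLaw_one, charFun_gammaLaw_two, Complex.real_smul, Complex.real_smul]
  have ht := one_sub_ofReal_mul_I_ne_zero t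
  have hpt := one_sub_ofReal_mul_I_ne_zero (p * t)
  push_cast at hpt ⊢
  field_simp
  ring
end

section
/- Let w, y > 0 and t ∈ ℝ. Then B(w,y)⁻¹·∫₀¹ u^{w-1}(1-u)^{y-1}/(1 - i t u)^{w+y+1} du = (1 - i t)^{-w-1}·(1 - i t y/(w+y)), where B(w,y) is the Beta function and i is the imaginary unit, and complex powers are taken with the principal branch. -/
/-!
Put `F(s) = ∫₀¹ u^(w-1) (1-u)^(y-1) (1 - isu)^(-(w+y)) du`. Integrating by parts against
`u^w (1-u)^y (1 - isu)^(-(w+y))`, which vanishes at both ends, and differentiating under the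
integral sign give `(1 - is) F'(s) = i w F(s)`, so `F(s) (1 - is)^w` is constant, equal to
`F(0) = B(w,y)`. The same two identities express the integral with exponent `w+y+1` through `F`.
-/

open Complex intervalIntegral Set
open MeasureTheory (volume)

namespace BetaKernel

lemma re_one_sub_I_mul_mul (s u : ℝ) : (1 - I * s * u).re = 1 := by simp

lemma one_sub_I_mul_mul_mem_slitPlane (s u : ℝ) : 1 - I * s * u ∈ slitPlane :=
  Or.inl (by rw [re_one_sub_I_mul_mul]; exact one_pos)

lemma one_sub_I_mul_mul_ne_zero (s u : ℝ) : 1 - I * s * u ≠ 0 :=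
  slitPlane_ne_zero (one_sub_I_mul_mul_mem_slitPlane s u)

lemma one_sub_I_mul_mul_cpow_add_one (s u : ℝ) (r : ℂ) :
    (1 - I * s * u) ^ (r + 1) = (1 - I * s * u) ^ r * (1 - I * s * u) := by
  rw [cpow_add _ _ (one_sub_I_mul_mul_ne_zero s u), cpow_one]

lemma norm_one_sub_I_mul_mul_cpow_le_one (s u : ℝ) {r : ℝ} (hr : r ≤ 0) :
    ‖(1 - I * s * u) ^ (r : ℂ)‖ ≤ 1 := by
  have h1 : 1 ≤ ‖1 - I * s * u‖ := by
    simpa [re_one_sub_I_mul_mul] using abs_re_le_norm (1 - I * s * u)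
  rw [norm_cpow_of_ne_zero (one_sub_I_mul_mul_ne_zero s u)]
  simpa using Real.rpow_le_one_of_one_le_of_nonpos h1 hr

lemma continuous_one_sub_I_mul_mul_cpow (s : ℝ) (r : ℂ) :
    Continuous fun u : ℝ => (1 - I * s * u) ^ r :=
  (by fun_prop : Continuous fun u : ℝ => 1 - I * s * u).cpow continuous_const
    (one_sub_I_mul_mul_mem_slitPlane s)

lemma hasDerivAt_one_sub_mul_cpow {a r : ℂ} {x : ℝ} (hx : 1 - a * x ∈ slitPlane) :
    HasDerivAt (fun x : ℝ => (1 - a * x) ^ r) (-(r * a) * (1 - a * x) ^ (r - 1)) x := by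
  have h : HasDerivAt (fun z : ℂ => 1 - a * z) (-a) x := by
    simpa using ((hasDerivAt_id (x : ℂ)).const_mul a).const_sub 1
  convert (h.cpow_const (c := r) hx).comp_ofReal using 1
  ring

noncomputable def betaDensity (w y u : ℝ) : ℂ := ((u ^ (w - 1) * (1 - u) ^ (y - 1) : ℝ) : ℂ)

lemma betaDensity_eq_cpow (w y : ℝ) {u : ℝ} (hu : u ∈ Icc (0 : ℝ) 1) :
    betaDensity w y u = (u : ℂ) ^ ((w : ℂ) - 1) * (1 - (u : ℂ)) ^ ((y : ℂ) - 1) := by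
  rw [betaDensity, ofReal_mul, ofReal_cpow hu.1, ofReal_cpow (sub_nonneg.2 hu.2)]
  push_cast
  rfl

lemma intervalIntegral_betaDensity_eq_betaIntegral (w y : ℝ) :
    ∫ u in (0 : ℝ)..1, betaDensity w y u = betaIntegral w y :=
  integral_congr fun u hu => betaDensity_eq_cpow w y (by rwa [uIcc_of_le zero_le_one] at hu)

variable {w y : ℝ}

lemma intervalIntegrable_betaDensity (hw : 0 < w) (hy : 0 < y) :
    IntervalIntegrable (betaDensity w y) volume 0 1 := by
  refine (betaIntegral_convergent (u := w) (v := y) (by simpa) (by simpa)).congr ?_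
  rw [uIoc_of_le zero_le_one]
  exact fun u hu => (betaDensity_eq_cpow w y (Ioc_subset_Icc_self hu)).symm

lemma intervalIntegrable_betaDensity_mul (hw : 0 < w) (hy : 0 < y) {g : ℝ → ℂ}
    (hg : Continuous g) : IntervalIntegrable (fun u => betaDensity w y u * g u) volume 0 1 :=
  (intervalIntegrable_betaDensity hw hy).mul_continuousOn hg.continuousOn

noncomputable def kernelIntegral (w y : ℝ) (ρ : ℂ) (s : ℝ) : ℂ :=
  ∫ u in (0 : ℝ)..1, betaDensity w y u * (1 - I * s * u) ^ (-ρ)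

noncomputable def kernelMoment (w y : ℝ) (ρ : ℂ) (s : ℝ) : ℂ :=
  ∫ u in (0 : ℝ)..1, betaDensity w y u * (u * (1 - I * s * u) ^ (-ρ))

lemma intervalIntegrable_kernel (hw : 0 < w) (hy : 0 < y) (ρ : ℂ) (s : ℝ) :
    IntervalIntegrable (fun u : ℝ => betaDensity w y u * (1 - I * s * u) ^ (-ρ)) volume 0 1 :=
  intervalIntegrable_betaDensity_mul hw hy (continuous_one_sub_I_mul_mul_cpow s _)

lemma intervalIntegrable_moment (hw : 0 < w) (hy : 0 < y) (ρ : ℂ) (s : ℝ) :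
    IntervalIntegrable (fun u : ℝ => betaDensity w y u * (u * (1 - I * s * u) ^ (-ρ)))
      volume 0 1 :=
  intervalIntegrable_betaDensity_mul hw hy
    (continuous_ofReal.mul (continuous_one_sub_I_mul_mul_cpow s _))

lemma kernelIntegral_eq_sub (hw : 0 < w) (hy : 0 < y) (ρ : ℂ) (s : ℝ) :
    kernelIntegral w y ρ s =
      kernelIntegral w y (ρ + 1) s - I * s * kernelMoment w y (ρ + 1) s := by
  have hpt : ∀ u : ℝ, betaDensity w y u * (1 - I * s * u) ^ (-ρ) =
      betaDensity w y u * (1 - I * s * u) ^ (-(ρ + 1)) -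
        I * s * (betaDensity w y u * (u * (1 - I * s * u) ^ (-(ρ + 1)))) := by
    intro u
    rw [show -ρ = -(ρ + 1) + 1 by ring, one_sub_I_mul_mul_cpow_add_one]
    ring
  rw [kernelIntegral, integral_congr fun u _ => hpt u, integral_sub, integral_const_mul]
  · rfl
  · exact intervalIntegrable_kernel hw hy _ s
  · exact (intervalIntegrable_moment hw hy _ s).const_mul _

lemma kernelIntegral_zero (w y : ℝ) (ρ : ℂ) : kernelIntegral w y ρ 0 = betaIntegral w y := by
  simp [kernelIntegral, intervalIntegral_betaDensity_eq_betaIntegral]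

lemma rpow_eq_rpow_sub_one_mul {u : ℝ} (hu : u ≠ 0) (p : ℝ) : u ^ p = u ^ (p - 1) * u := by
  rw [← Real.rpow_add_one hu, sub_add_cancel]

lemma hasDerivAt_rpow_mul_one_sub_rpow {u : ℝ} (hu : u ∈ Ioo (0 : ℝ) 1) :
    HasDerivAt (fun v : ℝ => v ^ w * (1 - v) ^ y)
      (u ^ (w - 1) * (1 - u) ^ (y - 1) * (w * (1 - u) - y * u)) u := by
  have hu1 : 1 - u ≠ 0 := (sub_pos.2 hu.2).ne'
  have h := (Real.hasDerivAt_rpow_const (p := w) (Or.inl hu.1.ne')).mul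
    ((Real.hasDerivAt_rpow_const (p := y) (Or.inl hu1)).comp u ((hasDerivAt_id u).const_sub 1))
  refine h.congr_deriv ?_
  simp only [Function.comp_apply, rpow_eq_rpow_sub_one_mul hu.1.ne' w,
    rpow_eq_rpow_sub_one_mul hu1 y]
  ring

noncomputable def betaPrimitive (w y s v : ℝ) : ℂ :=
  ((v ^ w * (1 - v) ^ y : ℝ) : ℂ) * (1 - I * s * v) ^ (-((w : ℂ) + y))

lemma hasDerivAt_betaPrimitive (s : ℝ) {u : ℝ} (hu : u ∈ Ioo (0 : ℝ) 1) :
    HasDerivAt (betaPrimitive w y s)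
      (betaDensity w y u *
        ((w - (w + y - I * s * y) * u) * (1 - I * s * u) ^ (-((w : ℂ) + y + 1)))) u := by
  have h := (hasDerivAt_rpow_mul_one_sub_rpow (w := w) (y := y) hu).ofReal_comp.mul
    (hasDerivAt_one_sub_mul_cpow (a := I * s) (r := -((w : ℂ) + y))
      (one_sub_I_mul_mul_mem_slitPlane s u))
  refine h.congr_deriv ?_
  rw [show -((w : ℂ) + y) = -((w : ℂ) + y + 1) + 1 by ring, one_sub_I_mul_mul_cpow_add_one,
    show -((w : ℂ) + y + 1) + 1 - 1 = -((w : ℂ) + y + 1) by ring, betaDensity,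
    rpow_eq_rpow_sub_one_mul hu.1.ne' w, rpow_eq_rpow_sub_one_mul (sub_pos.2 hu.2).ne' y]
  push_cast
  ring

lemma mul_kernelIntegral_self_add_one_eq (hw : 0 < w) (hy : 0 < y) (s : ℝ) :
    w * kernelIntegral w y (w + y + 1) s =
      (w + y - I * s * y) * kernelMoment w y (w + y + 1) s := by
  have hG : ContinuousOn (betaPrimitive w y s) (Icc 0 1) := by
    refine Continuous.continuousOn ?_
    exact (continuous_ofReal.comp ((Real.continuous_rpow_const hw.le).mul
      ((Real.continuous_rpow_const hy.le).comp (continuous_sub_left 1)))).mul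
      (continuous_one_sub_I_mul_mul_cpow s _)
  have hint := intervalIntegrable_betaDensity_mul hw hy (g := fun u : ℝ =>
    (w - (w + y - I * s * y) * u) * (1 - I * s * u) ^ (-((w : ℂ) + y + 1)))
    ((continuous_const.sub (continuous_const.mul continuous_ofReal)).mul
      (continuous_one_sub_I_mul_mul_cpow s _))
  have hibp := integral_eq_sub_of_hasDeriv_right_of_le zero_le_one hG
    (fun u hu => (hasDerivAt_betaPrimitive s hu).hasDerivWithinAt) hint
  have hG0 : betaPrimitive w y s 0 = 0 := by simp [betaPrimitive, Real.zero_rpow hw.ne']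
  have hG1 : betaPrimitive w y s 1 = 0 := by simp [betaPrimitive, Real.zero_rpow hy.ne']
  rw [hG0, hG1, sub_zero] at hibp
  have hsplit : ∀ u : ℝ, betaDensity w y u *
      ((w - (w + y - I * s * y) * u) * (1 - I * s * u) ^ (-((w : ℂ) + y + 1))) =
      w * (betaDensity w y u * (1 - I * s * u) ^ (-((w : ℂ) + y + 1))) -
        (w + y - I * s * y) *
          (betaDensity w y u * (u * (1 - I * s * u) ^ (-((w : ℂ) + y + 1)))) :=
    fun u => by ring
  rw [integral_congr fun u _ => hsplit u, integral_sub, integral_const_mul,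
    integral_const_mul] at hibp
  · exact sub_eq_zero.1 hibp
  · exact (intervalIntegrable_kernel hw hy _ s).const_mul _
  · exact (intervalIntegrable_moment hw hy _ s).const_mul _

lemma norm_betaDensity_mul_moment_le {u : ℝ} (hu : u ∈ uIoc (0 : ℝ) 1) (s : ℝ) {ρ : ℝ}
    (hρ : -1 ≤ ρ) :
    ‖betaDensity w y u * (u * (1 - I * s * u) ^ (-((ρ : ℂ) + 1)))‖ ≤
      ‖betaDensity w y u‖ := by
  rw [uIoc_of_le zero_le_one] at hu
  have hK := norm_one_sub_I_mul_mul_cpow_le_one s u (r := -(ρ + 1)) (by linarith)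
  push_cast at hK
  rw [norm_mul, norm_mul, norm_real, Real.norm_of_nonneg hu.1.le]
  exact mul_le_of_le_one_right (norm_nonneg _) (mul_le_one₀ hu.2 (norm_nonneg _) hK)

lemma hasDerivAt_kernelIntegral (hw : 0 < w) (hy : 0 < y) {ρ : ℝ} (hρ : -1 ≤ ρ) (s : ℝ) :
    HasDerivAt (kernelIntegral w y ρ) (I * ρ * kernelMoment w y (ρ + 1) s) s := by
  have h_diff : ∀ u x : ℝ,
      HasDerivAt (fun x : ℝ => betaDensity w y u * (1 - I * x * u) ^ (-(ρ : ℂ)))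
      (I * ρ * (betaDensity w y u * (u * (1 - I * x * u) ^ (-((ρ : ℂ) + 1))))) x := by
    intro u x
    have h := (hasDerivAt_one_sub_mul_cpow (a := I * u) (r := -(ρ : ℂ)) (x := x)
      (by simpa [mul_right_comm] using one_sub_I_mul_mul_mem_slitPlane x u)).const_mul
        (betaDensity w y u)
    simp only [mul_right_comm I (u : ℂ)] at h
    refine h.congr_deriv ?_
    rw [show -(ρ : ℂ) - 1 = -((ρ : ℂ) + 1) by ring]
    ring
  have h := hasDerivAt_integral_of_dominated_loc_of_deriv_le (x₀ := s) Filter.univ_mem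
    (Filter.Eventually.of_forall fun x =>
      (intervalIntegrable_iff.1 (intervalIntegrable_kernel hw hy ρ x)).aestronglyMeasurable)
    (intervalIntegrable_kernel hw hy ρ s)
    (intervalIntegrable_iff.1 ((intervalIntegrable_moment hw hy (ρ + 1) s).const_mul
      (I * ρ))).aestronglyMeasurable
    (Filter.Eventually.of_forall fun u hu x _ => by
      rw [norm_mul, norm_mul, norm_I, one_mul, norm_real]
      exact mul_le_mul_of_nonneg_left (norm_betaDensity_mul_moment_le hu x hρ) (norm_nonneg _))
    ((intervalIntegrable_betaDensity hw hy).norm.const_mul ‖(ρ : ℂ)‖)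
    (Filter.Eventually.of_forall fun u _ x _ => h_diff u x)
  rw [integral_const_mul] at h
  exact h.2

lemma mul_kernelIntegral_self_eq (hw : 0 < w) (hy : 0 < y) (s : ℝ) :
    w * kernelIntegral w y (w + y) s =
      (w + y) * (1 - I * s) * kernelMoment w y (w + y + 1) s := by
  rw [kernelIntegral_eq_sub hw hy]
  linear_combination mul_kernelIntegral_self_add_one_eq hw hy s

lemma kernelIntegral_self_eq (hw : 0 < w) (hy : 0 < y) (s : ℝ) :
    kernelIntegral w y (w + y) s = betaIntegral w y * (1 - I * s) ^ (-(w : ℂ)) := by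
  have hderiv : ∀ x : ℝ,
      HasDerivAt (fun x : ℝ => kernelIntegral w y (w + y) x * (1 - I * x) ^ (w : ℂ)) 0 x := by
    intro x
    have hF := hasDerivAt_kernelIntegral hw hy (ρ := w + y) (by linarith) x
    have hG := hasDerivAt_one_sub_mul_cpow (a := I) (r := w) (x := x)
      (by simpa using one_sub_I_mul_mul_mem_slitPlane x 1)
    push_cast at hF
    refine (hF.mul hG).congr_deriv ?_
    have hsplit := one_sub_I_mul_mul_cpow_add_one x 1 ((w : ℂ) - 1)
    simp only [ofReal_one, mul_one, sub_add_cancel] at hsplit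
    rw [hsplit]
    linear_combination (-(I * (1 - I * x) ^ ((w : ℂ) - 1))) * mul_kernelIntegral_self_eq hw hy x
  have hconst := is_const_of_deriv_eq_zero (fun x => (hderiv x).differentiableAt)
    (fun x => (hderiv x).deriv) s 0
  simp only [ofReal_zero, mul_zero, sub_zero, one_cpow, mul_one, kernelIntegral_zero] at hconst
  rw [← hconst, mul_assoc, cpow_neg, mul_inv_cancel₀, mul_one]
  exact cpow_ne_zero_iff.2 (Or.inl (by simpa using one_sub_I_mul_mul_ne_zero s 1))

lemma kernelIntegral_self_add_one_eq (hw : 0 < w) (hy : 0 < y) (s : ℝ) :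
    kernelIntegral w y (w + y + 1) s =
      betaIntegral w y * (1 - I * s) ^ (-(w : ℂ) - 1) * (1 - I * s * (y / (w + y))) := by
  have hz : 1 - I * s ≠ 0 := by simpa using one_sub_I_mul_mul_ne_zero s 1
  have hw' : (w : ℂ) ≠ 0 := ofReal_ne_zero.2 hw.ne'
  have hwy : (w : ℂ) + y ≠ 0 := by exact_mod_cast (add_pos hw hy).ne'
  rw [cpow_sub _ _ hz, cpow_one, ← mul_div_assoc, ← kernelIntegral_self_eq hw hy]
  field_simp
  refine mul_left_cancel₀ hw' ?_
  linear_combination (1 - I * s) * (w + y) * mul_kernelIntegral_self_add_one_eq hw hy s -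
    (w + y - I * s * y) * mul_kernelIntegral_self_eq hw hy s

lemma ofReal_beta_eq_betaIntegral (hw : 0 < w) (hy : 0 < y) :
    (ProbabilityTheory.beta w y : ℂ) = betaIntegral w y := by
  rw [betaIntegral_eq_Gamma_mul_div _ _ (by simpa) (by simpa), ProbabilityTheory.beta,
    ← ofReal_add, Gamma_ofReal, Gamma_ofReal, Gamma_ofReal]
  push_cast
  rfl

end BetaKernel

open BetaKernel

theorem stmt_14 (w y t : ℝ) (hw : 0 < w) (hy : 0 < y) :
    ((Real.Gamma w * Real.Gamma y / Real.Gamma (w + y) : ℝ) : ℂ)⁻¹ *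
        ∫ u in (0:ℝ)..1,
          ((u ^ (w - 1) * (1 - u) ^ (y - 1) : ℝ) : ℂ) /
            (1 - Complex.I * t * u) ^ ((w : ℂ) + y + 1) =
      (1 - Complex.I * t) ^ (-(w : ℂ) - 1) * (1 - Complex.I * t * (y / (w + y))) := by
  have hB : (ProbabilityTheory.beta w y : ℂ) ≠ 0 :=
    ofReal_ne_zero.2 (ProbabilityTheory.beta_pos hw hy).ne'
  have hJ : ∫ u in (0:ℝ)..1, ((u ^ (w - 1) * (1 - u) ^ (y - 1) : ℝ) : ℂ) /
      (1 - I * t * u) ^ ((w : ℂ) + y + 1) = kernelIntegral w y (w + y + 1) t :=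
    integral_congr fun u _ => by rw [div_eq_mul_inv, ← cpow_neg]; rfl
  change (ProbabilityTheory.beta w y : ℂ)⁻¹ * _ = _
  rw [hJ, kernelIntegral_self_add_one_eq hw hy, ← ofReal_beta_eq_betaIntegral hw hy, mul_assoc,
    inv_mul_cancel_left₀ hB]
end
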